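/- For all L, M ∈ 𝐋, the infimum defining d_ABW(L,M) is attained (i.e., there exists O ∈ 𝐎 with ‖L − MO‖_F = d_ABW(L,M)), and moreover d_ABW(L,M)² = ‖L‖_F² + ‖M‖_F² − 2·∑_{t=1}^{T} tr( ((MᵀL)_{t,t}ᵀ (MᵀL)_{t,t})^{1/2} ), where (·)^{1/2} denotes the positive semidefinite square root of a positive semidefinite matrix (so the t-th summand is the sum of the singular values of (MᵀL)_{t,t}). -/

import Mathlib

open Matrix Filter Topology

/-- Square matrices of size `dT × dT`, indexed by blocks: index `(t, i)` is
row/column `i` within block `t`. -/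
abbrev Mat (d T : ℕ) := Matrix (Fin T × Fin d) (Fin T × Fin d) ℝ

/-- The `t`-th diagonal `d × d` block of a `dT × dT` matrix. -/
def blk {d T : ℕ} (A : Mat d T) (t : Fin T) : Matrix (Fin d) (Fin d) ℝ :=
  fun i j => A (t, i) (t, j)

/-- The `t`-th block column of a `dT × dT` matrix, a `dT × d` matrix. -/
def colBlk {d T : ℕ} (A : Mat d T) (t : Fin T) : Matrix (Fin T × Fin d) (Fin d) ℝ :=
  fun p j => A p (t, j)

/-- Membership in `𝐋`: block lower triangular matrices. -/
def memL {d T : ℕ} (A : Mat d T) : Prop :=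
  ∀ (t s : Fin T) (i j : Fin d), t < s → A (t, i) (s, j) = 0

/-- Membership in `𝐎`: block diagonal matrices with orthogonal `d × d` diagonal blocks
(equivalently: block diagonal and orthogonal). -/
def memO {d T : ℕ} (O : Mat d T) : Prop :=
  (∀ (t s : Fin T) (i j : Fin d), t ≠ s → O (t, i) (s, j) = 0) ∧ Oᵀ * O = 1

/-- The Frobenius norm of a real matrix. -/
noncomputable def frobNorm {m n : Type*} [Fintype m] [Fintype n] (A : Matrix m n ℝ) : ℝ :=
  Real.sqrt (∑ i, ∑ j, (A i j) ^ 2)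

/-- The Frobenius inner product of two real matrices. -/
noncomputable def frobInner {m n : Type*} [Fintype m] [Fintype n] (A B : Matrix m n ℝ) : ℝ :=
  ∑ i, ∑ j, A i j * B i j

/-- The adapted Bures–Wasserstein distance `d_ABW(L, M) = inf_{O ∈ 𝐎} ‖L - M O‖_F`. -/
noncomputable def dABW {d T : ℕ} (L M : Mat d T) : ℝ :=
  sInf {r : ℝ | ∃ O : Mat d T, memO O ∧ r = frobNorm (L - M * O)}

/-- The set `𝐎*(L, M)` of optimizers of `inf_{O ∈ 𝐎} ‖L - M O‖_F`. -/
noncomputable def OStar {d T : ℕ} (L M : Mat d T) : Set (Mat d T) :=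
  {O | memO O ∧ frobNorm (L - M * O) = dABW L M}

/-- The set `𝐕(L) = {M P - L : M ∈ 𝐋, P ∈ 𝐎*(L, M)}`. -/
noncomputable def VSet {d T : ℕ} (L : Mat d T) : Set (Mat d T) :=
  {V | ∃ M P : Mat d T, memL M ∧ P ∈ OStar L M ∧ V = M * P - L}

/-- The set `𝒱(L) = {V ∈ 𝐋 : (Vᵀ L)_{t,t} is symmetric for all t}`. -/
def calV {d T : ℕ} (L : Mat d T) : Set (Mat d T) :=
  {V | memL V ∧ ∀ t : Fin T, (blk (Vᵀ * L) t).IsSymm}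

/-- The set `𝐋^reg = {L ∈ 𝐋 : (Lᵀ L)_{t,t} is positive definite for all t}`. -/
def LReg {d T : ℕ} : Set (Mat d T) :=
  {L | memL L ∧ ∀ t : Fin T, (blk (Lᵀ * L) t).PosDef}

/-- The sum of the singular values of a real square matrix `A`,
i.e. the trace of the positive semidefinite square root of `Aᵀ A`. -/
noncomputable def svSum {n : ℕ} (A : Matrix (Fin n) (Fin n) ℝ) : ℝ :=
  ((Matrix.posSemidef_conjTranspose_mul_self A).1.eigenvectorUnitary.1 *
    diagonal ((RCLike.ofReal : ℝ → ℝ) ∘ (√·) ∘ (Matrix.posSemidef_conjTranspose_mul_self A).1.eigenvalues) *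
    (star (Matrix.posSemidef_conjTranspose_mul_self A).1.eigenvectorUnitary : Matrix (Fin n) (Fin n) ℝ)).trace

/-- The operator norm of a real matrix: the supremum of the euclidean norm `‖A x‖₂`
over the euclidean unit ball. -/
noncomputable def opNorm {m n : Type*} [Fintype m] [Fintype n] (A : Matrix m n ℝ) : ℝ :=
  sSup {r : ℝ | ∃ x : n → ℝ, (∑ j, (x j) ^ 2) ≤ 1 ∧ r = Real.sqrt (∑ i, (A.mulVec x i) ^ 2)}

/-!
The cost splits as `‖L - M O‖_F² = ‖L‖_F² + ‖M‖_F² - 2 ⟨MᵀL, O⟩_F`, and for block-diagonal `O` the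
pairing `⟨MᵀL, O⟩_F` is the sum over `t` of `⟨(MᵀL)_{t,t}, O_t⟩_F`, so the blocks can be optimised
independently. Each block is an orthogonal Procrustes problem: `sup_{R orthogonal} tr(A R) = tr |A|`.
A maximiser `Q` exists by compactness of the orthogonal group; first-order optimality along Givens
rotations makes `S = A Q` symmetric, and comparing with `S · sign(S)` gives `tr S = tr |S|`, while
`|S| = Qᵀ |A| Q` has the same trace as `|A|`.
-/

open scoped MatrixOrder

namespace CFC

variable {A : Type*} [Ring A] [StarRing A] [TopologicalSpace A] [Algebra ℝ A]
  [ContinuousFunctionalCalculus ℝ A IsSelfAdjoint] [PartialOrder A] [StarOrderedRing A]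
  [NonnegSpectrumClass ℝ A] [IsTopologicalRing A] [T2Space A]

theorem abs_mul_unitary (a : A) {u : A} (hu : u ∈ unitary A) :
    abs (a * u) = star u * abs a * u := by
  refine sqrt_unique ?_ (star_left_conjugate_nonneg (abs_nonneg a) u)
  calc star u * abs a * u * (star u * abs a * u)
      = star u * (abs a * (u * star u) * abs a) * u := by simp only [mul_assoc]
    _ = star (a * u) * (a * u) := by
      rw [Unitary.mul_star_self_of_mem hu, mul_one, abs_mul_abs, star_mul]
      simp only [mul_assoc]

end CFC

section Frobenius

variable {l m n : Type*} [Fintype l] [Fintype m] [Fintype n]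

theorem frobNorm_nonneg (X : Matrix m n ℝ) : 0 ≤ frobNorm X := Real.sqrt_nonneg _

theorem frobNorm_sq (X : Matrix m n ℝ) : frobNorm X ^ 2 = frobInner X X := by
  rw [frobNorm, Real.sq_sqrt (by positivity)]
  simp only [frobInner, sq]

theorem frobInner_eq_trace (X Y : Matrix m n ℝ) : frobInner X Y = (Xᵀ * Y).trace := by
  simp only [frobInner, trace, diag, mul_apply, transpose_apply]
  exact Finset.sum_comm

theorem frobInner_transpose_right (X : Matrix m n ℝ) (Y : Matrix n m ℝ) :
    frobInner X Yᵀ = (X * Y).trace := by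
  simp [frobInner, trace, mul_apply]

theorem frobInner_mul_right (X : Matrix l n ℝ) (Y : Matrix l m ℝ) (Z : Matrix m n ℝ) :
    frobInner X (Y * Z) = frobInner (Yᵀ * X) Z := by
  rw [frobInner_eq_trace, frobInner_eq_trace, transpose_mul, transpose_transpose,
    Matrix.mul_assoc]

theorem frobNorm_sub_sq (X Y : Matrix m n ℝ) :
    frobNorm (X - Y) ^ 2 = frobNorm X ^ 2 + frobNorm Y ^ 2 - 2 * frobInner X Y := by
  simp only [frobNorm_sq, frobInner, Matrix.sub_apply, Finset.mul_sum, ← Finset.sum_add_distrib,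
    ← Finset.sum_sub_distrib]
  exact Finset.sum_congr rfl fun i _ => Finset.sum_congr rfl fun j _ => by ring

theorem frobNorm_mul_orthogonal [DecidableEq n] (X : Matrix m n ℝ) {O : Matrix n n ℝ}
    (hO : Oᵀ * O = 1) : frobNorm (X * O) = frobNorm X := by
  refine (sq_eq_sq₀ (frobNorm_nonneg _) (frobNorm_nonneg _)).mp ?_
  rw [frobNorm_sq, frobNorm_sq, frobInner_eq_trace, frobInner_eq_trace, transpose_mul,
    Matrix.mul_assoc, trace_mul_comm]
  simp only [Matrix.mul_assoc, mul_eq_one_comm.mp hO, Matrix.mul_one]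

end Frobenius

namespace Matrix

variable {n : Type*} [Fintype n] [DecidableEq n]

theorem isCompact_orthogonalGroup : IsCompact (orthogonalGroup n ℝ : Set (Matrix n n ℝ)) := by
  refine IsCompact.of_isClosed_subset
    (isCompact_univ_pi fun _ => isCompact_univ_pi fun _ => isCompact_closedBall (0 : ℝ) 1)
    isClosed_unitary ?_
  intro U hU i _ j _
  simpa using entry_norm_bound_of_unitary hU i j

theorem exists_isMaxOn_trace_mul (A : Matrix n n ℝ) :
    ∃ Q ∈ orthogonalGroup n ℝ, IsMaxOn (fun R => (A * R).trace) (orthogonalGroup n ℝ) Q :=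
  isCompact_orthogonalGroup.exists_isMaxOn ⟨1, one_mem _⟩
    (continuous_const.matrix_mul continuous_id).matrix_trace.continuousOn

def givensRotation (i j : n) (c s : ℝ) : Matrix n n ℝ :=
  1 + (c - 1) • (single i i 1 + single j j 1) + s • (single i j 1 - single j i 1)

theorem givensRotation_mem_orthogonalGroup {i j : n} (hij : i ≠ j) {c s : ℝ}
    (hcs : c ^ 2 + s ^ 2 = 1) : givensRotation i j c s ∈ orthogonalGroup n ℝ := by
  set P : Matrix n n ℝ := single i i 1 + single j j 1
  set K : Matrix n n ℝ := single i j 1 - single j i 1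
  have hPt : Pᵀ = P := by simp [P]
  have hKt : Kᵀ = -K := by simp [K]
  have hPP : P * P = P := by simp [P, add_mul, mul_add, hij, hij.symm]
  have hPK : P * K = K := by simp [P, K, add_mul, mul_sub, hij, hij.symm]
  have hKP : K * P = K := by
    simp only [K, P, mul_add, sub_mul, single_mul_single_same, single_mul_single_of_ne, hij,
      hij.symm, Ne, not_false_eq_true, mul_one, zero_sub, sub_zero]
    abel
  have hKK : K * K = -P := by
    simp only [K, P, mul_sub, sub_mul, single_mul_single_same, single_mul_single_of_ne, hij,
      hij.symm, Ne, not_false_eq_true, mul_one, zero_sub, sub_zero, neg_add_rev]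
    abel
  have hsum : (c - 1) * (c - 1) + 2 * (c - 1) + s * s = 0 := by linear_combination hcs
  rw [mem_orthogonalGroup_iff', givensRotation]
  calc (1 + (c - 1) • P + s • K)ᵀ * (1 + (c - 1) • P + s • K)
      = 1 + ((c - 1) * (c - 1) + 2 * (c - 1) + s * s) • P := by
        simp only [transpose_add, transpose_smul, transpose_one, hPt, hKt, add_mul, mul_add,
          one_mul, mul_one, smul_mul_assoc, mul_smul_comm, hPP, hPK, hKP, hKK,
          smul_neg, neg_mul, neg_neg]
        module
    _ = 1 := by rw [hsum, zero_smul, add_zero]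

theorem trace_mul_givensRotation (S : Matrix n n ℝ) (i j : n) (c s : ℝ) :
    (S * givensRotation i j c s).trace
      = S.trace + (c - 1) * (S i i + S j j) + s * (S j i - S i j) := by
  simp only [givensRotation, mul_add, mul_sub, mul_one, Algebra.mul_smul_comm, trace_add,
    trace_sub, trace_smul, trace_mul_single, smul_add, smul_single, smul_eq_mul, one_smul,
    MulOpposite.op_one, MulOpposite.op_sub, MulOpposite.smul_eq_mul_unop, MulOpposite.unop_op,
    MulOpposite.unop_one, MulOpposite.unop_sub]
  ring

theorem isSymm_of_forall_trace_mul_le {S : Matrix n n ℝ}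
    (hS : ∀ R ∈ orthogonalGroup n ℝ, (S * R).trace ≤ S.trace) : S.IsSymm := by
  ext j i
  rcases eq_or_ne i j with rfl | hij
  · rfl
  set f : ℝ → ℝ := fun θ =>
    (Real.cos θ - 1) * (S i i + S j j) + Real.sin θ * (S j i - S i j)
  have hmax : IsLocalMax f 0 := Filter.Eventually.of_forall fun θ => by
    have := hS _ (givensRotation_mem_orthogonalGroup hij (Real.cos_sq_add_sin_sq θ))
    rw [trace_mul_givensRotation] at this
    simp only [f, Real.cos_zero, Real.sin_zero]
    linarith
  have hderiv : HasDerivAt f (S j i - S i j) 0 :=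
    ((((Real.hasDerivAt_cos 0).sub_const 1).mul_const (S i i + S j j)).add
      ((Real.hasDerivAt_sin 0).mul_const (S j i - S i j))).congr_deriv (by simp)
  have := hmax.hasDerivAt_eq_zero hderiv
  rw [transpose_apply]
  linarith

theorem exists_mem_orthogonalGroup_mul_eq_abs {S : Matrix n n ℝ} (hS : IsSelfAdjoint S) :
    ∃ R ∈ orthogonalGroup n ℝ, S * R = CFC.abs S := by
  set f : ℝ → ℝ := fun x => if 0 ≤ x then 1 else -1
  have hf : ContinuousOn f (spectrum ℝ S) := S.finite_real_spectrum.continuousOn f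
  refine ⟨cfc f S, ?_, ?_⟩
  · rw [cfc_unitary_iff f S]
    intro x _
    simp only [f]
    split_ifs <;> norm_num
  · have hmul : S * cfc f S = cfc (fun x => x * f x) S := by
      rw [cfc_mul (fun x => x) f S, cfc_id' ℝ S]
    rw [hmul, CFC.abs_eq_cfc_norm S]
    refine cfc_congr fun x _ => ?_
    simp only [f]
    split_ifs with h
    · simp [abs_of_nonneg h]
    · simp [abs_of_neg (not_le.mp h)]

theorem trace_le_trace_abs {S : Matrix n n ℝ} (hS : IsSelfAdjoint S) :
    S.trace ≤ (CFC.abs S).trace := by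
  have hneg : 0 ≤ CFC.abs S - S := by
    rw [CFC.abs_sub_self S]
    exact smul_nonneg zero_le_two (CFC.negPart_nonneg S)
  have := (nonneg_iff_posSemidef.mp hneg).trace_nonneg
  rw [trace_sub] at this
  linarith

theorem trace_eq_trace_abs_of_forall_trace_mul_le {S : Matrix n n ℝ}
    (hS : ∀ R ∈ orthogonalGroup n ℝ, (S * R).trace ≤ S.trace) :
    S.trace = (CFC.abs S).trace := by
  have hSa : IsSelfAdjoint S := isHermitian_iff_isSelfAdjoint.mp (isSymm_of_forall_trace_mul_le hS)
  obtain ⟨R, hR, hSR⟩ := exists_mem_orthogonalGroup_mul_eq_abs hSa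
  exact le_antisymm (trace_le_trace_abs hSa) (hSR ▸ hS R hR)

theorem isGreatest_trace_mul_orthogonalGroup (A : Matrix n n ℝ) :
    IsGreatest ((fun R => (A * R).trace) '' orthogonalGroup n ℝ) (CFC.abs A).trace := by
  obtain ⟨Q, hQ, hmax⟩ := exists_isMaxOn_trace_mul A
  have hAQ : (A * Q).trace = (CFC.abs A).trace := by
    have hS : ∀ R ∈ orthogonalGroup n ℝ, (A * Q * R).trace ≤ (A * Q).trace := fun R hR => by
      rw [Matrix.mul_assoc]
      exact hmax (mul_mem hQ hR)
    rw [trace_eq_trace_abs_of_forall_trace_mul_le hS, CFC.abs_mul_unitary A hQ, trace_mul_cycle,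
      Unitary.mul_star_self_of_mem hQ, one_mul]
  refine ⟨⟨Q, hQ, hAQ⟩, ?_⟩
  rintro _ ⟨R, hR, rfl⟩
  exact hAQ ▸ hmax hR

theorem isGreatest_frobInner_orthogonalGroup (A : Matrix n n ℝ) :
    IsGreatest (frobInner A '' orthogonalGroup n ℝ) (CFC.abs A).trace := by
  obtain ⟨⟨Q, hQ, hAQ⟩, hub⟩ := isGreatest_trace_mul_orthogonalGroup A
  refine ⟨⟨Qᵀ, transpose_mem_unitaryGroup_iff.mpr hQ, ?_⟩, ?_⟩
  · exact (frobInner_transpose_right A Q).trans hAQ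
  · rintro _ ⟨R, hR, rfl⟩
    rw [← transpose_transpose R, frobInner_transpose_right]
    exact hub ⟨_, transpose_mem_unitaryGroup_iff.mpr hR, rfl⟩

end Matrix

theorem svSum_eq_trace_abs {n : ℕ} (A : Matrix (Fin n) (Fin n) ℝ) :
    svSum A = (CFC.abs A).trace := by
  rw [CFC.abs, star_eq_conjTranspose, CFC.sqrt_eq_cfc,
    cfc_nnreal_eq_real _ (Aᴴ * A) (posSemidef_conjTranspose_mul_self A).nonneg,
    (posSemidef_conjTranspose_mul_self A).1.cfc_eq, IsHermitian.cfc,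
    Unitary.conjStarAlgAut_apply, svSum]
  simp only [Real.sqrt]

section Blocks

variable {d T : ℕ}

/-- Mathlib's `blockDiagonal` indexes by `(row, block)`, whereas `Mat` indexes by `(block, row)`. -/
def blkDiag (P : Fin T → Matrix (Fin d) (Fin d) ℝ) : Mat d T :=
  (blockDiagonal P).submatrix (Equiv.prodComm _ _) (Equiv.prodComm _ _)

theorem blkDiag_apply (P : Fin T → Matrix (Fin d) (Fin d) ℝ) (t s : Fin T) (i j : Fin d) :
    blkDiag P (t, i) (s, j) = if t = s then P t i j else 0 :=
  blockDiagonal_apply' P i t j s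

theorem blkDiag_blk {O : Mat d T}
    (hO : ∀ (t s : Fin T) (i j : Fin d), t ≠ s → O (t, i) (s, j) = 0) :
    blkDiag (blk O) = O := by
  ext ⟨t, i⟩ ⟨s, j⟩
  rw [blkDiag_apply]
  split_ifs with hts
  · subst hts; rfl
  · exact (hO t s i j hts).symm

theorem memO_blkDiag_iff (P : Fin T → Matrix (Fin d) (Fin d) ℝ) :
    memO (blkDiag P) ↔ ∀ t, P t ∈ orthogonalGroup (Fin d) ℝ := by
  have hprod : (blkDiag P)ᵀ * blkDiag P = (blockDiagonal fun t => (P t)ᵀ * P t).submatrix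
      (Equiv.prodComm _ _) (Equiv.prodComm _ _) := by
    rw [blkDiag, transpose_submatrix, submatrix_mul_equiv, blockDiagonal_transpose,
      blockDiagonal_mul]
  simp only [mem_orthogonalGroup_iff']
  refine ⟨fun h => ?_, fun h => ⟨fun t s i j hts => by rw [blkDiag_apply, if_neg hts], ?_⟩⟩
  · intro t
    ext i j
    have := congrFun (congrFun h.2 (t, i)) (t, j)
    rw [hprod] at this
    simpa only [submatrix_apply, Equiv.prodComm_apply, Prod.swap_prod_mk, blockDiagonal_apply_eq,
      one_apply, Prod.mk.injEq, true_and] using this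
  · rw [hprod, funext h, ← Pi.one_def, blockDiagonal_one, submatrix_one_equiv]

theorem blk_mem_orthogonalGroup {O : Mat d T} (hO : memO O) (t : Fin T) :
    blk O t ∈ orthogonalGroup (Fin d) ℝ :=
  (memO_blkDiag_iff (blk O)).mp (by rwa [blkDiag_blk hO.1]) t

theorem frobInner_blkDiag (A : Mat d T) (P : Fin T → Matrix (Fin d) (Fin d) ℝ) :
    frobInner A (blkDiag P) = ∑ t, frobInner (blk A t) (P t) := by
  simp only [frobInner, Fintype.sum_prod_type, blkDiag_apply, mul_ite, mul_zero]
  refine Finset.sum_congr rfl fun t _ => Finset.sum_congr rfl fun i _ => ?_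
  rw [Finset.sum_comm]
  simp only [Finset.sum_ite_eq, Finset.mem_univ, if_true, blk]

theorem isGreatest_frobInner_memO (A : Mat d T) :
    IsGreatest (frobInner A '' {O | memO O}) (∑ t, svSum (blk A t)) := by
  have hproc t := isGreatest_frobInner_orthogonalGroup (blk A t)
  choose P hP hPA using fun t => (hproc t).1
  refine ⟨⟨blkDiag P, (memO_blkDiag_iff P).mpr hP, ?_⟩, ?_⟩
  · simp only [frobInner_blkDiag, hPA, svSum_eq_trace_abs]
  · rintro _ ⟨O, hO, rfl⟩
    rw [← blkDiag_blk hO.1, frobInner_blkDiag]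
    refine Finset.sum_le_sum fun t _ => ?_
    rw [svSum_eq_trace_abs]
    exact (hproc t).2 ⟨_, blk_mem_orthogonalGroup hO t, rfl⟩

end Blocks

theorem stmt0_general (d T : ℕ) (L M : Mat d T) :
    (∃ O : Mat d T, memO O ∧ frobNorm (L - M * O) = dABW L M) ∧
    dABW L M ^ 2 =
      frobNorm L ^ 2 + frobNorm M ^ 2 - 2 * ∑ t : Fin T, svSum (blk (Mᵀ * L) t) := by
  have hcost : ∀ O, memO O → frobNorm (L - M * O) ^ 2
      = frobNorm L ^ 2 + frobNorm M ^ 2 - 2 * frobInner (Mᵀ * L) O := fun O hO => by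
    rw [frobNorm_sub_sq, frobNorm_mul_orthogonal M hO.2, frobInner_mul_right]
  obtain ⟨⟨O₀, hO₀, hmax⟩, hub⟩ := isGreatest_frobInner_memO (Mᵀ * L)
  have hleast :
      IsLeast {r | ∃ O, memO O ∧ r = frobNorm (L - M * O)} (frobNorm (L - M * O₀)) := by
    refine ⟨⟨O₀, hO₀, rfl⟩, ?_⟩
    rintro _ ⟨O, hO, rfl⟩
    refine (pow_le_pow_iff_left₀ (frobNorm_nonneg _) (frobNorm_nonneg _) two_ne_zero).mp ?_
    rw [hcost O₀ hO₀, hcost O hO]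
    linarith [hub ⟨O, hO, rfl⟩]
  have hdist : dABW L M = frobNorm (L - M * O₀) := hleast.csInf_eq
  exact ⟨⟨O₀, hO₀, hdist.symm⟩, by rw [hdist, hcost O₀ hO₀, hmax]⟩

/-- the infimum defining `d_ABW(L,M)` is attained, and
`d_ABW(L,M)² = ‖L‖_F² + ‖M‖_F² - 2 ∑_t tr(((MᵀL)_{t,t}ᵀ (MᵀL)_{t,t})^{1/2})`. -/
theorem stmt0 (d T : ℕ) (hd : 0 < d) (hT : 0 < T) (L M : Mat d T)
    (hL : memL L) (hM : memL M) :
    (∃ O : Mat d T, memO O ∧ frobNorm (L - M * O) = dABW L M) ∧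
    dABW L M ^ 2 =
      frobNorm L ^ 2 + frobNorm M ^ 2 - 2 * ∑ t : Fin T, svSum (blk (Mᵀ * L) t) :=
  stmt0_general d T L M
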